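/- For every real number z > 0, the modified Bessel function of the first kind of order zero, I₀(z) := (1/(2π))·∫_{−π}^{π} e^{z cos θ} dθ, satisfies I₀(z) ≤ (√π/2)·e^{z}/√z, and hence I₀(z) ≤ e^{z}/√z. -/

import Mathlib

open Real MeasureTheory intervalIntegral

/-- The modified Bessel function of the first kind of order zero,
`I₀(z) = (1/(2π)) ∫_{-π}^{π} e^{z cos θ} dθ`. -/
noncomputable def besselI0 (z : ℝ) : ℝ :=
  (1 / (2 * π)) * ∫ θ in (-π)..π, Real.exp (z * Real.cos θ)

/-- Upper bound on `I₀`: for `z > 0`, `I₀(z) ≤ (√π/2) e^z/√z ≤ e^z/√z`. -/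
theorem besselI0_upper_bound (z : ℝ) (hz : 0 < z) :
    besselI0 z ≤ (Real.sqrt π / 2) * Real.exp z / Real.sqrt z ∧
    besselI0 z ≤ Real.exp z / Real.sqrt z := by
  have hπ := Real.pi_pos
  set a : ℝ := 2 * z / π ^ 2 with ha_def
  have ha : 0 < a := by positivity
  have hpt : ∀ θ ∈ Set.Icc (-π) π,
      Real.exp (z * Real.cos θ) ≤ Real.exp z * Real.exp (-a * θ ^ 2) := by
    intro θ hθ
    rw [← Real.exp_add]
    apply Real.exp_le_exp.2
    have hcos : Real.cos θ ≤ 1 - 2 / π ^ 2 * θ ^ 2 :=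
      Real.cos_le_one_sub_mul_cos_sq (abs_le.2 ⟨hθ.1, hθ.2⟩)
    calc z * Real.cos θ ≤ z * (1 - 2 / π ^ 2 * θ ^ 2) :=
          mul_le_mul_of_nonneg_left hcos hz.le
      _ = z + -a * θ ^ 2 := by rw [ha_def]; field_simp; ring
  have hint1 : IntervalIntegrable (fun θ => Real.exp (z * Real.cos θ)) volume (-π) π :=
    (Real.continuous_exp.comp (continuous_const.mul Real.continuous_cos)).intervalIntegrable _ _
  have hint2 : IntervalIntegrable (fun θ => Real.exp z * Real.exp (-a * θ ^ 2)) volume (-π) π :=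
    (continuous_const.mul (Real.continuous_exp.comp
      (continuous_const.mul (continuous_pow 2)))).intervalIntegrable _ _
  have hle : (-π : ℝ) ≤ π := by linarith
  have h1 : (∫ θ in (-π)..π, Real.exp (z * Real.cos θ))
      ≤ ∫ θ in (-π)..π, Real.exp z * Real.exp (-a * θ ^ 2) :=
    intervalIntegral.integral_mono_on hle hint1 hint2 hpt
  have hgauss : (∫ θ in (-π)..π, Real.exp (-a * θ ^ 2)) ≤ Real.sqrt (π / a) := by
    rw [intervalIntegral.integral_of_le hle]
    calc (∫ θ in Set.Ioc (-π) π, Real.exp (-a * θ ^ 2))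
        ≤ ∫ θ : ℝ, Real.exp (-a * θ ^ 2) :=
          setIntegral_le_integral (integrable_exp_neg_mul_sq ha)
            (Filter.Eventually.of_forall fun x => (Real.exp_pos _).le)
      _ = Real.sqrt (π / a) := integral_gaussian a
  have h2 : (∫ θ in (-π)..π, Real.exp z * Real.exp (-a * θ ^ 2))
      = Real.exp z * ∫ θ in (-π)..π, Real.exp (-a * θ ^ 2) :=
    intervalIntegral.integral_const_mul _ _
  have hbound : besselI0 z ≤ (1 / (2 * π)) * (Real.exp z * Real.sqrt (π / a)) := by
    unfold besselI0
    have hc : (0:ℝ) ≤ 1 / (2 * π) := by positivity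
    apply mul_le_mul_of_nonneg_left _ hc
    calc (∫ θ in (-π)..π, Real.exp (z * Real.cos θ))
        ≤ ∫ θ in (-π)..π, Real.exp z * Real.exp (-a * θ ^ 2) := h1
      _ = Real.exp z * ∫ θ in (-π)..π, Real.exp (-a * θ ^ 2) := h2
      _ ≤ Real.exp z * Real.sqrt (π / a) :=
          mul_le_mul_of_nonneg_left hgauss (Real.exp_pos _).le
  have hsq : Real.sqrt (π / a) = π * Real.sqrt π / Real.sqrt (2 * z) := by
    rw [ha_def, show π / (2 * z / π ^ 2) = π ^ 2 * π / (2 * z) by field_simp,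
      Real.sqrt_div (by positivity), Real.sqrt_mul (by positivity),
      Real.sqrt_sq hπ.le]
  rw [hsq] at hbound
  have h2z : Real.sqrt z ≤ Real.sqrt (2 * z) := Real.sqrt_le_sqrt (by linarith)
  have hsz : (0:ℝ) < Real.sqrt z := Real.sqrt_pos.2 hz
  have hs2z : (0:ℝ) < Real.sqrt (2 * z) := Real.sqrt_pos.2 (by linarith)
  have hsπ : (0:ℝ) < Real.sqrt π := Real.sqrt_pos.2 hπ
  have key : besselI0 z ≤ (Real.sqrt π / 2) * Real.exp z / Real.sqrt z := by
    refine hbound.trans ?_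
    rw [show (1 / (2 * π)) * (Real.exp z * (π * Real.sqrt π / Real.sqrt (2 * z)))
        = (Real.sqrt π * Real.exp z / 2) / Real.sqrt (2 * z) by field_simp,
      show (Real.sqrt π / 2) * Real.exp z / Real.sqrt z
        = (Real.sqrt π * Real.exp z / 2) / Real.sqrt z by ring]
    apply div_le_div_of_nonneg_left _ hsz h2z
    positivity
  refine ⟨key, key.trans ?_⟩
  have hπ4 : Real.sqrt π ≤ 2 := by
    rw [show (2:ℝ) = Real.sqrt 4 by rw [show (4:ℝ) = 2^2 by norm_num, Real.sqrt_sq]; norm_num]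
    exact Real.sqrt_le_sqrt (by linarith [Real.pi_le_four])
  rw [div_le_div_iff₀ hsz hsz]
  have : (Real.sqrt π / 2) ≤ 1 := by linarith
  nlinarith [mul_nonneg (by linarith : (0:ℝ) ≤ 1 - Real.sqrt π / 2)
    (mul_pos (Real.exp_pos z) hsz).le]
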